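/- Let a > 0, A ≥ 1, λ ∈ ℂ∖{0}, and let f ∈ C¹[0,A] satisfy f(x) = 1 + (λ x^{a+1}/B(a,a+1)) ∫₀^A y^{a-1} (x+y)^{-1-2a} f(y) dy for all x ∈ (0,A). Then for every x > 0, f′(x) = -λ f(A) A^a x^a / (B(a,a+1) (x+A)^{1+2a}) + (λ/B(a,a+1)) ∫₀^A (x/y)^a (1 + x/y)^{-1-2a} f′(y) dy/y. -/

import Mathlib

/-!
With `K(x,y) = x^(a+1) y^(a-1) (x+y)^(-1-2a)` and `G(x,y) = x^a y^a (x+y)^(-1-2a)` the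
equation reads `f(x) = 1 + (λ/B) ∫₀^A K(x,y) f(y) dy`, and
`G(x,y) = (x/y)^a (1+x/y)^(-1-2a) / y` is the kernel of the claimed formula. The two kernels are
linked by `∂ₓK = -∂_y G`. Differentiating under the integral sign (the `x`-derivative of `K` is
dominated by a multiple of `y^(a-1)`, integrable at `0` because `a > 0`) and then integrating by
parts in `y` gives the formula; there is no boundary term at `y = 0` because `G(x,0) = 0`.
-/

open MeasureTheory Set

/-- The Euler Beta function `B(p,q) = Γ(p)Γ(q)/Γ(p+q)` for real arguments. -/
noncomputable def betaR (p q : ℝ) : ℝ := Real.Gamma p * Real.Gamma q / Real.Gamma (p + q)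

lemma integrableOn_Ioc_of_norm_le_rpow {E : Type*} [NormedAddCommGroup E] {a A C : ℝ}
    (ha : 0 < a) {g : ℝ → E} (hg : AEStronglyMeasurable g (volume.restrict (Ioc 0 A)))
    (hle : ∀ y ∈ Ioc 0 A, ‖g y‖ ≤ C * y ^ (a - 1)) : IntegrableOn g (Ioc 0 A) :=
  Integrable.mono' ((intervalIntegral.intervalIntegrable_rpow' (by linarith)).1.const_mul C) hg
    ((ae_restrict_iff' measurableSet_Ioc).2 (ae_of_all _ hle))

lemma norm_ofReal_mul_le {k C M : ℝ} {z : ℂ} (hk : |k| ≤ C) (hz : ‖z‖ ≤ M) :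
    ‖(k : ℂ) * z‖ ≤ C * M :=
  norm_mul_le_of_le (by rwa [Complex.norm_real, Real.norm_eq_abs]) hz

lemma hasDerivAt_rpow_add_const {x y : ℝ} (hxy : 0 < x + y) (p : ℝ) :
    HasDerivAt (fun t => (t + y) ^ p) (p * (x + y) ^ p / (x + y)) x := by
  have := (Real.hasDerivAt_rpow_const (p := p) (Or.inl hxy.ne')).comp x
    ((hasDerivAt_id x).add_const y)
  simpa [Function.comp_def, Real.rpow_sub_one hxy.ne', mul_div_assoc] using this

lemma integrableOn_ofReal_mul_of_abs_le_rpow {a A C : ℝ} (ha : 0 < a) {k : ℝ → ℝ}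
    {f : ℝ → ℂ} (hk : Measurable k) (hk_le : ∀ y ∈ Ioc 0 A, |k y| ≤ C * y ^ (a - 1))
    (hf : ContinuousOn f (Icc 0 A)) : IntegrableOn (fun y => (k y : ℂ) * f y) (Ioc 0 A) := by
  obtain ⟨M, hM⟩ := isCompact_Icc.exists_bound_of_continuousOn hf
  refine integrableOn_Ioc_of_norm_le_rpow (C := C * M) ha
    ((Complex.measurable_ofReal.comp hk).aestronglyMeasurable.mul
      ((hf.mono Ioc_subset_Icc_self).aestronglyMeasurable measurableSet_Ioc)) fun y hy => ?_
  refine (norm_ofReal_mul_le (hk_le y hy) (hM y (Ioc_subset_Icc_self hy))).trans_eq ?_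
  ring

noncomputable def dixonKernel (a x y : ℝ) : ℝ :=
  x ^ (a + 1) * y ^ (a - 1) * (x + y) ^ (-(1 + 2 * a))

noncomputable def dixonPotential (a x y : ℝ) : ℝ := x ^ a * y ^ a * (x + y) ^ (-(1 + 2 * a))

noncomputable def dixonPotentialDeriv (a x y : ℝ) : ℝ :=
  x ^ a * y ^ (a - 1) * (x + y) ^ (-(1 + 2 * a)) * (a - (1 + 2 * a) * (y / (x + y)))

section Kernel

variable {a x y : ℝ}

lemma hasDerivAt_dixonPotential (hx : 0 < x) (hy : 0 < y) :
    HasDerivAt (dixonPotential a x) (dixonPotentialDeriv a x y) y := by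
  have hpow := (Real.hasDerivAt_rpow_const (p := a) (Or.inl hy.ne')).const_mul (x ^ a)
  have hshift := hasDerivAt_rpow_add_const (add_pos hy hx) (-(1 + 2 * a))
  refine ((hpow.mul hshift).congr_deriv ?_).congr_of_eventuallyEq ?_
  · rw [dixonPotentialDeriv, Real.rpow_sub_one hy.ne', add_comm y x]
    field_simp
    ring
  · filter_upwards with z
    simp [dixonPotential, add_comm]

lemma hasDerivAt_dixonKernel (hx : 0 < x) (hy : 0 < y) :
    HasDerivAt (fun t => dixonKernel a t y) (-dixonPotentialDeriv a x y) x := by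
  have hxy : 0 < x + y := add_pos hx hy
  have hpow := Real.hasDerivAt_rpow_const (p := a + 1) (Or.inl hx.ne')
  have := (hpow.mul_const (y ^ (a - 1))).mul (hasDerivAt_rpow_add_const hxy (-(1 + 2 * a)))
  refine this.congr_deriv ?_
  rw [add_sub_cancel_right, dixonPotentialDeriv, Real.rpow_add_one hx.ne']
  field_simp
  ring

lemma abs_dixonPotentialDeriv_le (ha : 0 ≤ a) (hx : 0 < x) (hy : 0 < y) :
    |dixonPotentialDeriv a x y| ≤ (1 + a) * x ^ (-(1 + a)) * y ^ (a - 1) := by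
  have hxy : 0 < x + y := add_pos hx hy
  have hratio : 0 ≤ y / (x + y) ∧ y / (x + y) ≤ 1 :=
    ⟨div_nonneg hy.le hxy.le, (div_le_one hxy).2 (by linarith)⟩
  have hfactor : |a - (1 + 2 * a) * (y / (x + y))| ≤ 1 + a := by
    rw [abs_le]; constructor <;> nlinarith
  have hdecay : (x + y) ^ (-(1 + 2 * a)) ≤ x ^ (-(1 + 2 * a)) :=
    Real.rpow_le_rpow_of_nonpos hx (by linarith) (by linarith)
  have hexp : x ^ a * x ^ (-(1 + 2 * a)) = x ^ (-(1 + a)) := by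
    rw [← Real.rpow_add hx]; ring_nf
  have hpos : 0 ≤ x ^ a * y ^ (a - 1) := by positivity
  calc |dixonPotentialDeriv a x y|
      = x ^ a * y ^ (a - 1) * (x + y) ^ (-(1 + 2 * a)) * |a - (1 + 2 * a) * (y / (x + y))| := by
        rw [dixonPotentialDeriv, abs_mul, abs_of_nonneg (by positivity)]
    _ ≤ x ^ a * y ^ (a - 1) * x ^ (-(1 + 2 * a)) * (1 + a) := by gcongr
    _ = (1 + a) * x ^ (-(1 + a)) * y ^ (a - 1) := by rw [← hexp]; ring

lemma abs_dixonKernel_le (ha : 0 ≤ a) (hx : 0 < x) (hy : 0 < y) :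
    |dixonKernel a x y| ≤ x ^ (-a) * y ^ (a - 1) := by
  have hexp : x ^ (a + 1) * x ^ (-(1 + 2 * a)) = x ^ (-a) := by
    rw [← Real.rpow_add hx]; ring_nf
  rw [abs_of_nonneg (by unfold dixonKernel; positivity), ← hexp, dixonKernel]
  have : (x + y) ^ (-(1 + 2 * a)) ≤ x ^ (-(1 + 2 * a)) :=
    Real.rpow_le_rpow_of_nonpos hx (by linarith) (by linarith)
  calc x ^ (a + 1) * y ^ (a - 1) * (x + y) ^ (-(1 + 2 * a))
      ≤ x ^ (a + 1) * y ^ (a - 1) * x ^ (-(1 + 2 * a)) := by gcongr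
    _ = _ := by ring

lemma dixonPotential_zero_right (ha : 0 < a) : dixonPotential a x 0 = 0 := by
  simp [dixonPotential, Real.zero_rpow ha.ne']

lemma dixonPotential_eq_div (hx : 0 < x) (hy : 0 < y) :
    dixonPotential a x y = (x / y) ^ a * (1 + x / y) ^ (-(1 + 2 * a)) / y := by
  have hxy : 0 < x + y := add_pos hx hy
  have hsum : 1 + x / y = (x + y) / y := by field_simp; ring
  have hy_exp : y ^ (1 + 2 * a) = y ^ a * y ^ a * y := by
    rw [← Real.rpow_add hy, ← Real.rpow_add_one hy.ne']; ring_nf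
  rw [hsum, Real.div_rpow hx.le hy.le, Real.div_rpow hxy.le hy.le, Real.rpow_neg hy.le,
    Real.rpow_neg hxy.le, hy_exp, dixonPotential, Real.rpow_neg hxy.le]
  have : y ^ a ≠ 0 := by positivity
  field_simp

lemma measurable_dixonKernel (a t : ℝ) : Measurable (dixonKernel a t) := by
  unfold dixonKernel; fun_prop

lemma measurable_dixonPotentialDeriv (a t : ℝ) : Measurable (dixonPotentialDeriv a t) := by
  unfold dixonPotentialDeriv; fun_prop

lemma continuousOn_dixonPotential (ha : 0 ≤ a) (hx : 0 < x) (A : ℝ) :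
    ContinuousOn (dixonPotential a x) (Icc 0 A) := by
  refine (continuousOn_const.mul (continuousOn_id.rpow_const fun _ _ => Or.inr ha)).mul
    ((continuousOn_const.add continuousOn_id).rpow_const fun y hy => Or.inl ?_)
  exact (add_pos_of_pos_of_nonneg hx hy.1).ne'

end Kernel

section DixonIntegral

variable {a A x : ℝ} {f : ℝ → ℂ}

lemma hasDerivAt_integral_dixonKernel_mul (ha : 0 < a) (hf : ContinuousOn f (Icc 0 A))
    (hx : 0 < x) :
    HasDerivAt (fun t => ∫ y in Ioc 0 A, (dixonKernel a t y : ℂ) * f y)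
      (-∫ y in Ioc 0 A, (dixonPotentialDeriv a x y : ℂ) * f y) x := by
  obtain ⟨M, hM⟩ := isCompact_Icc.exists_bound_of_continuousOn hf
  have hfM : ∀ y ∈ Ioc 0 A, ‖f y‖ ≤ M := fun y hy => hM y (Ioc_subset_Icc_self hy)
  have hf_meas : AEStronglyMeasurable f (volume.restrict (Ioc 0 A)) :=
    (hf.mono Ioc_subset_Icc_self).aestronglyMeasurable measurableSet_Ioc
  set C := (1 + a) * (x / 2) ^ (-(1 + a)) * M
  have hdom : ∀ y ∈ Ioc 0 A, ∀ t ∈ Ioi (x / 2),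
      ‖((-dixonPotentialDeriv a t y : ℝ) : ℂ) * f y‖ ≤ C * y ^ (a - 1) := by
    intro y hy t ht
    have htpow : t ^ (-(1 + a)) ≤ (x / 2) ^ (-(1 + a)) :=
      Real.rpow_le_rpow_of_nonpos (by positivity) (le_of_lt ht) (by linarith)
    have hle := abs_dixonPotentialDeriv_le ha.le ((half_pos hx).trans ht) hy.1
    refine (norm_ofReal_mul_le ((abs_neg _).trans_le hle) (hfM y hy)).trans ?_
    have : 0 ≤ M := (norm_nonneg _).trans (hfM y hy)
    have : 0 ≤ y ^ (a - 1) := Real.rpow_nonneg hy.1.le _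
    calc (1 + a) * t ^ (-(1 + a)) * y ^ (a - 1) * M
        ≤ (1 + a) * (x / 2) ^ (-(1 + a)) * y ^ (a - 1) * M := by gcongr
      _ = C * y ^ (a - 1) := by ring
  have hderiv : ∀ y ∈ Ioc 0 A, ∀ t ∈ Ioi (x / 2),
      HasDerivAt (fun s => (dixonKernel a s y : ℂ) * f y)
        (((-dixonPotentialDeriv a t y : ℝ) : ℂ) * f y) t := fun y hy t ht =>
    ((hasDerivAt_dixonKernel ((half_pos hx).trans ht) hy.1).ofReal_comp).mul_const (f y)
  have hdiff := hasDerivAt_integral_of_dominated_loc_of_deriv_le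
    (Ioi_mem_nhds (half_lt_self hx))
    (F := fun t y => (dixonKernel a t y : ℂ) * f y) (bound := fun y => C * y ^ (a - 1))
    (.of_forall fun t =>
      (Complex.measurable_ofReal.comp (measurable_dixonKernel a t)).aestronglyMeasurable.mul
        hf_meas)
    (integrableOn_ofReal_mul_of_abs_le_rpow ha (measurable_dixonKernel a x)
      (fun y hy => abs_dixonKernel_le ha.le hx hy.1) hf)
    ((Complex.measurable_ofReal.comp
      (measurable_dixonPotentialDeriv a x).neg).aestronglyMeasurable.mul hf_meas)
    ((ae_restrict_iff' measurableSet_Ioc).2 (ae_of_all _ hdom))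
    ((intervalIntegral.intervalIntegrable_rpow' (by linarith)).1.const_mul C)
    ((ae_restrict_iff' measurableSet_Ioc).2 (ae_of_all _ hderiv))
  simpa only [Complex.ofReal_neg, neg_mul, integral_neg] using hdiff.2

lemma integral_dixonPotentialDeriv_mul (ha : 0 < a) (hA : 0 ≤ A) (hx : 0 < x) {f' : ℝ → ℂ}
    (hf : ContinuousOn f (Icc 0 A)) (hf' : ContinuousOn f' (Icc 0 A))
    (hderiv : ∀ y ∈ Ioo 0 A, HasDerivAt f (f' y) y) :
    ∫ y in Ioc 0 A, (dixonPotentialDeriv a x y : ℂ) * f y = (dixonPotential a x A : ℂ) * f A -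
      ∫ y in Ioc 0 A, (dixonPotential a x y : ℂ) * f' y := by
  have hG : ContinuousOn (fun y => (dixonPotential a x y : ℂ)) (Icc 0 A) :=
    Complex.continuous_ofReal.comp_continuousOn (continuousOn_dixonPotential ha.le hx A)
  have hGf_int : IntegrableOn (fun y => (dixonPotentialDeriv a x y : ℂ) * f y) (Ioc 0 A) :=
    integrableOn_ofReal_mul_of_abs_le_rpow ha (measurable_dixonPotentialDeriv a x)
      (fun y hy => abs_dixonPotentialDeriv_le ha.le hx hy.1) hf
  have hGf'_int : IntegrableOn (fun y => (dixonPotential a x y : ℂ) * f' y) (Ioc 0 A) :=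
    (hG.mul hf').integrableOn_Icc.mono_set Ioc_subset_Icc_self
  have hftc := intervalIntegral.integral_eq_sub_of_hasDerivAt_of_le hA (hG.mul hf)
    (fun y hy => ((hasDerivAt_dixonPotential hx hy.1).ofReal_comp).mul (hderiv y hy))
    ((intervalIntegrable_iff_integrableOn_Ioc_of_le hA).2 (hGf_int.add hGf'_int))
  rw [intervalIntegral.integral_of_le hA, integral_add hGf_int hGf'_int] at hftc
  simp only [Pi.mul_apply, dixonPotential_zero_right ha, Complex.ofReal_zero, zero_mul,
    sub_zero] at hftc
  rw [← hftc, add_sub_cancel_right]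

end DixonIntegral

theorem dixon_derivative_equation_general (a A : ℝ) (ha : 0 < a)
    (lam : ℂ) (f f' : ℝ → ℂ)
    (hf : ContinuousOn f (Icc 0 A)) (hf' : ContinuousOn f' (Icc 0 A))
    (hderiv : ∀ x ∈ Ioo (0:ℝ) A, HasDerivAt f (f' x) x)
    (heq : ∀ x ∈ Ioo (0:ℝ) A,
      f x = 1 + lam * ((x ^ (a + 1) / betaR a (a + 1) : ℝ) : ℂ) *
        ∫ y in Ioc (0:ℝ) A, ((y ^ (a - 1) * (x + y) ^ (-(1 + 2 * a)) : ℝ) : ℂ) * f y) :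
    ∀ x ∈ Ioo (0:ℝ) A,
      f' x = -(lam * f A *
          ((A ^ a * x ^ a / (betaR a (a + 1) * (x + A) ^ (1 + 2 * a)) : ℝ) : ℂ))
        + (lam / (betaR a (a + 1) : ℝ)) *
          ∫ y in Ioc (0:ℝ) A,
            (((x / y) ^ a * (1 + x / y) ^ (-(1 + 2 * a)) / y : ℝ) : ℂ) * f' y := by
  rintro x ⟨hx, hxA⟩
  set B := betaR a (a + 1)
  have hf_eq : f =ᶠ[nhds x] fun t =>
      1 + lam / B * ∫ y in Ioc 0 A, (dixonKernel a t y : ℂ) * f y := by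
    filter_upwards [Ioo_mem_nhds hx hxA] with t ht
    simp_rw [heq t ht, dixonKernel, mul_assoc, Complex.ofReal_mul, mul_assoc, integral_const_mul]
    push_cast
    ring
  have hK := ((hasDerivAt_integral_dixonKernel_mul ha hf hx).const_mul (lam / B)).const_add 1
  have hf'x : f' x = lam / B * -∫ y in Ioc 0 A, (dixonPotentialDeriv a x y : ℂ) * f y :=
    (hderiv x ⟨hx, hxA⟩).unique (hK.congr_of_eventuallyEq hf_eq)
  have hboundary : A ^ a * x ^ a / (B * (x + A) ^ (1 + 2 * a)) = dixonPotential a x A / B := by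
    rw [dixonPotential, Real.rpow_neg (by linarith)]
    ring
  have htarget :
      ∫ y in Ioc 0 A, (((x / y) ^ a * (1 + x / y) ^ (-(1 + 2 * a)) / y : ℝ) : ℂ) * f' y =
        ∫ y in Ioc 0 A, (dixonPotential a x y : ℂ) * f' y :=
    setIntegral_congr_fun measurableSet_Ioc fun y hy => by rw [dixonPotential_eq_div hx hy.1]
  rw [hf'x, integral_dixonPotentialDeriv_mul ha (hx.trans hxA).le hx hf hf' hderiv, htarget,
    hboundary]
  push_cast
  ring

/-- If `f ∈ C¹[0,A]` (with derivative `f'`) satisfies the generalized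
Dixon equation on `(0,A)`, then for every `x ∈ (0,A)`,
`f'(x) = -λ f(A) A^a x^a/(B(a,a+1)(x+A)^(1+2a))
          + (λ/B(a,a+1)) ∫₀^A (x/y)^a (1+x/y)^(-1-2a) f'(y) dy/y`. -/
theorem dixon_derivative_equation (a A : ℝ) (ha : 0 < a) (hA : 1 ≤ A)
    (lam : ℂ) (hlam : lam ≠ 0) (f f' : ℝ → ℂ)
    (hf : ContinuousOn f (Icc 0 A)) (hf' : ContinuousOn f' (Icc 0 A))
    (hderiv : ∀ x ∈ Ioo (0:ℝ) A, HasDerivAt f (f' x) x)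
    (heq : ∀ x ∈ Ioo (0:ℝ) A,
      f x = 1 + lam * ((x ^ (a + 1) / betaR a (a + 1) : ℝ) : ℂ) *
        ∫ y in Ioc (0:ℝ) A, ((y ^ (a - 1) * (x + y) ^ (-(1 + 2 * a)) : ℝ) : ℂ) * f y) :
    ∀ x ∈ Ioo (0:ℝ) A,
      f' x = -(lam * f A *
          ((A ^ a * x ^ a / (betaR a (a + 1) * (x + A) ^ (1 + 2 * a)) : ℝ) : ℂ))
        + (lam / (betaR a (a + 1) : ℝ)) *
          ∫ y in Ioc (0:ℝ) A,
            (((x / y) ^ a * (1 + x / y) ^ (-(1 + 2 * a)) / y : ℝ) : ℂ) * f' y :=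
  dixon_derivative_equation_general a A ha lam f f' hf hf' hderiv heq
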